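/- arXiv:2101.00488 — 5 statements merged into one kernel-verified Lean document; each statement's English description precedes it below -/
import Mathlib

section
/- Feasible noise characterization: A vector w ∈ ℝ^{q_2} belongs to W and satisfies the quadratic noise constraint [1; w]^⊤ Φ [1; w] ≥ 0 if and only if there exists g_w ∈ ℝ^{n_w} such that w = −Y_p M g_w + w_0 and [1; g_w]^⊤ A_w [1; g_w] ≥ 0. -/
open Matrix

/-- `w ∈ W`: there exists `g` with `U_p g = u_ini` and `Y_p g = y_ini - w`. -/
def memW {q1 q2 N : ℕ} (Up : Matrix (Fin q1) (Fin N) ℝ) (Yp : Matrix (Fin q2) (Fin N) ℝ)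
    (uini : Fin q1 → ℝ) (yini : Fin q2 → ℝ) (w : Fin q2 → ℝ) : Prop :=
  ∃ g : Fin N → ℝ, Up.mulVec g = uini ∧ Yp.mulVec g = yini - w

/-- `g_w* = U_pᵀ (U_p U_pᵀ)⁻¹ u_ini`. -/
noncomputable def gwStar {q1 N : ℕ} (Up : Matrix (Fin q1) (Fin N) ℝ)
    (uini : Fin q1 → ℝ) : Fin N → ℝ :=
  (Upᵀ * (Up * Upᵀ)⁻¹).mulVec uini

/-- `w_0 = -Y_p g_w* + y_ini`. -/
noncomputable def wZero {q1 q2 N : ℕ} (Up : Matrix (Fin q1) (Fin N) ℝ)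
    (Yp : Matrix (Fin q2) (Fin N) ℝ) (uini : Fin q1 → ℝ) (yini : Fin q2 → ℝ) :
    Fin q2 → ℝ :=
  -(Yp.mulVec (gwStar Up uini)) + yini

/-- The matrix `A_w` from the feasible-noise parameterization. -/
noncomputable def Aw {q1 q2 N nw : ℕ} (Up : Matrix (Fin q1) (Fin N) ℝ)
    (Yp : Matrix (Fin q2) (Fin N) ℝ) (M : Matrix (Fin N) (Fin nw) ℝ)
    (uini : Fin q1 → ℝ) (yini : Fin q2 → ℝ)
    (Φ11 : Matrix (Fin 1) (Fin 1) ℝ) (Φ12 : Matrix (Fin 1) (Fin q2) ℝ)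
    (Φ22 : Matrix (Fin q2) (Fin q2) ℝ) :
    Matrix (Fin 1 ⊕ Fin nw) (Fin 1 ⊕ Fin nw) ℝ :=
  let w0 : Matrix (Fin q2) (Fin 1) ℝ := Matrix.of fun i _ => wZero Up Yp uini yini i
  Matrix.fromBlocks
    (Φ11 + w0ᵀ * Φ12ᵀ + Φ12 * w0 + w0ᵀ * Φ22 * w0)
    (-(Φ12 * (Yp * M)) - w0ᵀ * Φ22 * (Yp * M))
    (-(Mᵀ * Ypᵀ * Φ12ᵀ) - Mᵀ * Ypᵀ * Φ22 * w0)
    (Mᵀ * Ypᵀ * Φ22 * (Yp * M))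

section FeasibleNoiseAux

lemma colMulVecOne {q : ℕ} (A : Matrix (Fin q) (Fin 1) ℝ) :
    A.mulVec (fun _ => (1:ℝ)) = fun i => A i 0 := by
  funext i; simp [Matrix.mulVec, dotProduct]

lemma oneDot (c : Fin 1 → ℝ) : (fun (_ : Fin 1) => (1:ℝ)) ⬝ᵥ c = c 0 := by
  simp [dotProduct]

lemma quad_eval {q : ℕ} (A : Matrix (Fin 1) (Fin 1) ℝ) (B : Matrix (Fin 1) (Fin q) ℝ)
    (C : Matrix (Fin q) (Fin 1) ℝ) (D : Matrix (Fin q) (Fin q) ℝ) (x : Fin q → ℝ) :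
    Sum.elim (fun _ => (1:ℝ)) x ⬝ᵥ (Matrix.fromBlocks A B C D).mulVec (Sum.elim (fun _ => (1:ℝ)) x)
      = (A.mulVec (fun _ => 1)) 0 + (B.mulVec x) 0 + x ⬝ᵥ C.mulVec (fun _ => 1)
        + x ⬝ᵥ D.mulVec x := by
  rw [Matrix.fromBlocks_mulVec, sumElim_dotProduct_sumElim]
  simp only [Sum.elim_comp_inl, Sum.elim_comp_inr]
  rw [dotProduct_add, dotProduct_add, oneDot, oneDot]
  ring

lemma colT_mulVec_entry {q : ℕ} (c y : Fin q → ℝ) :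
    ((Matrix.of fun i (_ : Fin 1) => c i)ᵀ.mulVec y) 0 = c ⬝ᵥ y := by
  simp [Matrix.mulVec, dotProduct]

lemma row_mulVec_entry {q : ℕ} (B : Matrix (Fin 1) (Fin q) ℝ) (x : Fin q → ℝ) :
    (B.mulVec x) 0 = B 0 ⬝ᵥ x := rfl

lemma dot_transpose_mulVec {m n : ℕ} (A : Matrix (Fin m) (Fin n) ℝ) (x : Fin n → ℝ)
    (y : Fin m → ℝ) : x ⬝ᵥ Aᵀ.mulVec y = (A.mulVec x) ⬝ᵥ y := by
  rw [Matrix.dotProduct_mulVec, Matrix.vecMul_transpose]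

lemma quad_identity {q2 N nw : ℕ}
    (Yp : Matrix (Fin q2) (Fin N) ℝ)
    (M : Matrix (Fin N) (Fin nw) ℝ)
    (w0 : Fin q2 → ℝ)
    (Φ11 : Matrix (Fin 1) (Fin 1) ℝ) (Φ12 : Matrix (Fin 1) (Fin q2) ℝ)
    (Φ22 : Matrix (Fin q2) (Fin q2) ℝ) (gw : Fin nw → ℝ) :
    Sum.elim (fun _ => (1 : ℝ)) (-(Yp.mulVec (M.mulVec gw)) + w0) ⬝ᵥ
        (Matrix.fromBlocks Φ11 Φ12 Φ12ᵀ Φ22).mulVec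
          (Sum.elim (fun _ => (1 : ℝ)) (-(Yp.mulVec (M.mulVec gw)) + w0)) =
    Sum.elim (fun _ => (1 : ℝ)) gw ⬝ᵥ
        (Matrix.fromBlocks
          (Φ11 + (Matrix.of fun i (_ : Fin 1) => w0 i)ᵀ * Φ12ᵀ
             + Φ12 * (Matrix.of fun i (_ : Fin 1) => w0 i)
             + (Matrix.of fun i (_ : Fin 1) => w0 i)ᵀ * Φ22 * (Matrix.of fun i (_ : Fin 1) => w0 i))
          (-(Φ12 * (Yp * M)) - (Matrix.of fun i (_ : Fin 1) => w0 i)ᵀ * Φ22 * (Yp * M))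
          (-(Mᵀ * Ypᵀ * Φ12ᵀ) - Mᵀ * Ypᵀ * Φ22 * (Matrix.of fun i (_ : Fin 1) => w0 i))
          (Mᵀ * Ypᵀ * Φ22 * (Yp * M))).mulVec (Sum.elim (fun _ => (1 : ℝ)) gw) := by
  set v : Fin q2 → ℝ := Yp.mulVec (M.mulVec gw) with hv
  set w0m : Matrix (Fin q2) (Fin 1) ℝ := Matrix.of fun i (_ : Fin 1) => w0 i with hw0m
  rw [quad_eval, quad_eval]
  simp only [Matrix.add_mulVec, Matrix.sub_mulVec, Matrix.neg_mulVec, ← Matrix.mulVec_mulVec,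
    Pi.add_apply, Pi.sub_apply, Pi.neg_apply, dotProduct_add, dotProduct_sub, dotProduct_neg,
    add_dotProduct, sub_dotProduct, neg_dotProduct, Matrix.mulVec_add, Matrix.mulVec_neg,
    colMulVecOne, Matrix.of_apply, Matrix.transpose_apply, dot_transpose_mulVec]
  simp only [hw0m, Matrix.of_apply, colT_mulVec_entry, row_mulVec_entry, ← hv]
  have e1 : (fun i => w0 i) = w0 := rfl
  have e2 : (fun i => Φ12 0 i) = Φ12 0 := rfl
  have e3 : (Matrix.of fun i (_ : Fin 1) => w0 i)ᵀ 0 = w0 := rfl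
  rw [e1, e2, e3, dotProduct_comm v (Φ12 0), dotProduct_comm w0 (Φ12 0)]
  ring

end FeasibleNoiseAux

/-- Feasible noise characterization: `w ∈ W` satisfies `[1; w]ᵀ Φ [1; w] ≥ 0` iff
`w = -Y_p M g_w + w_0` for some `g_w` with `[1; g_w]ᵀ A_w [1; g_w] ≥ 0`. -/
theorem feasible_noise_characterization {q1 q2 N nw : ℕ}
    (Up : Matrix (Fin q1) (Fin N) ℝ) (Yp : Matrix (Fin q2) (Fin N) ℝ)
    (uini : Fin q1 → ℝ) (yini : Fin q2 → ℝ)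
    (hUp : Up.rank = q1)
    (M : Matrix (Fin N) (Fin nw) ℝ)
    (hMker : ∀ j, Up.mulVec (fun i => M i j) = 0)
    (hMindep : LinearIndependent ℝ (fun (j : Fin nw) (i : Fin N) => M i j))
    (hMspan : ∀ g : Fin N → ℝ, Up.mulVec g = 0 → ∃ c : Fin nw → ℝ, g = M.mulVec c)
    (Φ11 : Matrix (Fin 1) (Fin 1) ℝ) (Φ12 : Matrix (Fin 1) (Fin q2) ℝ)
    (Φ22 : Matrix (Fin q2) (Fin q2) ℝ) (hΦ22 : Φ22.IsSymm)
    (w : Fin q2 → ℝ) :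
    (memW Up Yp uini yini w ∧
      0 ≤ Sum.elim (fun _ => (1 : ℝ)) w ⬝ᵥ
        (Matrix.fromBlocks Φ11 Φ12 Φ12ᵀ Φ22).mulVec (Sum.elim (fun _ => (1 : ℝ)) w)) ↔
    (∃ gw : Fin nw → ℝ,
      w = -(Yp.mulVec (M.mulVec gw)) + wZero Up Yp uini yini ∧
      0 ≤ Sum.elim (fun _ => (1 : ℝ)) gw ⬝ᵥ
        (Aw Up Yp M uini yini Φ11 Φ12 Φ22).mulVec (Sum.elim (fun _ => (1 : ℝ)) gw)) := by
  -- `U_p U_pᵀ` is invertible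
  have hdet : IsUnit (Up * Upᵀ).det := by
    have hr : (Up * Upᵀ).rank = q1 := by rw [Matrix.rank_self_mul_transpose, hUp]
    have hsurj : Function.Surjective (Up * Upᵀ).mulVec := by
      have htop : LinearMap.range (Up * Upᵀ).mulVecLin = ⊤ := by
        apply Submodule.eq_top_of_finrank_eq
        simpa [Matrix.rank] using hr
      intro y
      obtain ⟨x, hx⟩ := LinearMap.range_eq_top.mp htop y
      exact ⟨x, hx⟩
    exact (Matrix.isUnit_iff_isUnit_det _).mp (Matrix.mulVec_surjective_iff_isUnit.mp hsurj)
  have hgw : Up.mulVec (gwStar Up uini) = uini := by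
    unfold gwStar
    rw [Matrix.mulVec_mulVec, ← Matrix.mul_assoc, Matrix.mul_nonsing_inv _ hdet,
      Matrix.one_mulVec]
  have hUpM : ∀ x : Fin nw → ℝ, Up.mulVec (M.mulVec x) = 0 := by
    intro x
    have hUM : Up * M = 0 := by
      ext i j
      have := congrFun (hMker j) i
      simpa [Matrix.mul_apply, Matrix.mulVec, dotProduct] using this
    rw [Matrix.mulVec_mulVec, hUM, Matrix.zero_mulVec]
  have hAw : Aw Up Yp M uini yini Φ11 Φ12 Φ22 =
      Matrix.fromBlocks
        (Φ11 + (Matrix.of fun i (_ : Fin 1) => wZero Up Yp uini yini i)ᵀ * Φ12ᵀ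
           + Φ12 * (Matrix.of fun i (_ : Fin 1) => wZero Up Yp uini yini i)
           + (Matrix.of fun i (_ : Fin 1) => wZero Up Yp uini yini i)ᵀ * Φ22
             * (Matrix.of fun i (_ : Fin 1) => wZero Up Yp uini yini i))
        (-(Φ12 * (Yp * M))
           - (Matrix.of fun i (_ : Fin 1) => wZero Up Yp uini yini i)ᵀ * Φ22 * (Yp * M))
        (-(Mᵀ * Ypᵀ * Φ12ᵀ)
           - Mᵀ * Ypᵀ * Φ22 * (Matrix.of fun i (_ : Fin 1) => wZero Up Yp uini yini i))
        (Mᵀ * Ypᵀ * Φ22 * (Yp * M)) := rfl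
  constructor
  · rintro ⟨⟨g, hg1, hg2⟩, hq⟩
    obtain ⟨c, hc⟩ := hMspan (g - gwStar Up uini)
      (by rw [Matrix.mulVec_sub, hg1, hgw, sub_self])
    have hgdecomp : g = gwStar Up uini + M.mulVec c := by
      rw [← hc]; abel
    have hwform : w = -(Yp.mulVec (M.mulVec c)) + wZero Up Yp uini yini := by
      have hw : w = yini - Yp.mulVec g := by rw [hg2]; abel
      rw [hw, hgdecomp, Matrix.mulVec_add]
      unfold wZero
      abel
    refine ⟨c, hwform, ?_⟩
    rw [hAw, ← quad_identity, ← hwform]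
    exact hq
  · rintro ⟨gw, hwform, hq⟩
    refine ⟨⟨gwStar Up uini + M.mulVec gw, ?_, ?_⟩, ?_⟩
    · rw [Matrix.mulVec_add, hgw, hUpM, add_zero]
    · rw [Matrix.mulVec_add, hwform]
      unfold wZero
      abel
    · rw [hwform, quad_identity, ← hAw]
      exact hq
end

section
/- Let U_p ∈ ℝ^{q_1×N}, Y_p1 ∈ ℝ^{s_1×N}, Y_p2 ∈ ℝ^{s_2×N}, U_f ∈ ℝ^{q_3×N} be real matrices. Assume: (i) every row of Y_p2 is a linear combination of the rows of [U_p; Y_p1; U_f], i.e., there exist matrices E_1, E_2, E_3 with Y_p2 = E_1 U_p + E_2 Y_p1 + E_3 U_f; and (ii) for every v ∈ ℝ^{q_3} there exists g ∈ ℝ^N with U_p g = 0, Y_p1 g = 0, Y_p2 g = 0, and U_f g = v. Then every row of Y_p2 is a linear combination of the rows of [U_p; Y_p1], i.e., there exist matrices F_1, F_2 with Y_p2 = F_1 U_p + F_2 Y_p1. -/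
open Matrix

/-- If every row of `Y_p2` is a linear combination of the rows of `[U_p; Y_p1; U_f]`
and for every `v` there is a `g` with `U_p g = 0`, `Y_p1 g = 0`, `Y_p2 g = 0` and
`U_f g = v`, then every row of `Y_p2` is a linear combination of the rows of
`[U_p; Y_p1]`. -/
theorem yp2_linear_combination {q1 s1 s2 q3 N : ℕ}
    (Up : Matrix (Fin q1) (Fin N) ℝ) (Yp1 : Matrix (Fin s1) (Fin N) ℝ)
    (Yp2 : Matrix (Fin s2) (Fin N) ℝ) (Uf : Matrix (Fin q3) (Fin N) ℝ)
    (hE : ∃ (E1 : Matrix (Fin s2) (Fin q1) ℝ) (E2 : Matrix (Fin s2) (Fin s1) ℝ)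
        (E3 : Matrix (Fin s2) (Fin q3) ℝ), Yp2 = E1 * Up + E2 * Yp1 + E3 * Uf)
    (hfeas : ∀ v : Fin q3 → ℝ, ∃ g : Fin N → ℝ,
        Up.mulVec g = 0 ∧ Yp1.mulVec g = 0 ∧ Yp2.mulVec g = 0 ∧ Uf.mulVec g = v) :
    ∃ (F1 : Matrix (Fin s2) (Fin q1) ℝ) (F2 : Matrix (Fin s2) (Fin s1) ℝ),
      Yp2 = F1 * Up + F2 * Yp1 := by
  obtain ⟨E1, E2, E3, hE⟩ := hE
  have hE3 : ∀ v : Fin q3 → ℝ, E3.mulVec v = 0 := by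
    intro v
    obtain ⟨g, h1, h2, h3, h4⟩ := hfeas v
    have := congrArg (fun M => M.mulVec g) hE
    simp only [add_mulVec, ← Matrix.mulVec_mulVec, h1, h2, h3, h4,
      Matrix.mulVec_zero] at this
    simpa using this.symm
  have hE3z : E3 = 0 := by
    ext i j
    have := congrFun (hE3 (Pi.single j 1)) i
    simpa [Matrix.mulVec_single] using this
  refine ⟨E1, E2, ?_⟩
  rw [hE, hE3z]
  simp
end

section
/- Output parameterization: Under the stated assumptions, for any g_w ∈ ℝ^{n_w}, any u ∈ ℝ^{q_3}, and any g ∈ ℝ^N satisfying U_p g = u_ini, Y_p1 g = (y_ini − w)_1, Y_p2 g = (y_ini − w)_2, and U_f g = u, where w = −Y_p M g_w + w_0 and (·)_1, (·)_2 denote the row blocks of y_ini − w corresponding to Y_p1 and Y_p2, it holds that Y_f g = B_u u + B_w g_w + y_0. -/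
open Matrix

/-! Put `h := M g_w + g_w*`, so that `U_p h = u_ini` and `Y_p1 h = Y_p1 g`. Since
`P := Λᵀ (Λ Λᵀ)⁻¹` is a right inverse of `Λ`, the vector `g' := h + P [0; 0; u - U_f h]` satisfies
`Λ g' = Λ g`, and unfolding `B_u`, `B_ini` gives `Y_f g' = B_u u + B_ini h`. As the rows of `Y_p2`
are combinations of those of `U_p` and `Y_p1`, `Λ g' = Λ g` forces `Y_p g' = Y_p g`, and
uniqueness of the predicted output yields `Y_f g = Y_f g'`. -/

/-- The stacked matrix `Λ = [U_p; Y_p1; U_f]`. -/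
def lambdaMat {q1 s1 q3 N : ℕ} (Up : Matrix (Fin q1) (Fin N) ℝ)
    (Yp1 : Matrix (Fin s1) (Fin N) ℝ) (Uf : Matrix (Fin q3) (Fin N) ℝ) :
    Matrix (Fin q1 ⊕ (Fin s1 ⊕ Fin q3)) (Fin N) ℝ :=
  Matrix.fromRows Up (Matrix.fromRows Yp1 Uf)

/-- `B_ini = Y_f (I + Λᵀ (Λ Λᵀ)⁻¹ [0; 0; -U_f])`. -/
noncomputable def Bini {q1 s1 q3 q4 N : ℕ} (Up : Matrix (Fin q1) (Fin N) ℝ)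
    (Yp1 : Matrix (Fin s1) (Fin N) ℝ) (Uf : Matrix (Fin q3) (Fin N) ℝ)
    (Yf : Matrix (Fin q4) (Fin N) ℝ) : Matrix (Fin q4) (Fin N) ℝ :=
  Yf * ((1 : Matrix (Fin N) (Fin N) ℝ) + (lambdaMat Up Yp1 Uf)ᵀ *
    (lambdaMat Up Yp1 Uf * (lambdaMat Up Yp1 Uf)ᵀ)⁻¹ *
    Matrix.fromRows 0 (Matrix.fromRows 0 (-Uf)))

/-- `B_u = Y_f Λᵀ (Λ Λᵀ)⁻¹ [0; 0; I]`. -/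
noncomputable def Bu {q1 s1 q3 q4 N : ℕ} (Up : Matrix (Fin q1) (Fin N) ℝ)
    (Yp1 : Matrix (Fin s1) (Fin N) ℝ) (Uf : Matrix (Fin q3) (Fin N) ℝ)
    (Yf : Matrix (Fin q4) (Fin N) ℝ) : Matrix (Fin q4) (Fin q3) ℝ :=
  Yf * ((lambdaMat Up Yp1 Uf)ᵀ *
    (lambdaMat Up Yp1 Uf * (lambdaMat Up Yp1 Uf)ᵀ)⁻¹ *
    Matrix.fromRows 0 (Matrix.fromRows 0 (1 : Matrix (Fin q3) (Fin q3) ℝ)) :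
      Matrix (Fin N) (Fin q3) ℝ)

theorem isUnit_det_of_rank_eq_card {K ι : Type*} [Field K] [Fintype ι] [DecidableEq ι]
    {B : Matrix ι ι K} (h : B.rank = Fintype.card ι) : IsUnit B.det := by
  have hrange : LinearMap.range B.mulVecLin = ⊤ :=
    Submodule.eq_top_of_finrank_eq (by rw [Module.finrank_fintype_fun_eq_card]; exact h)
  rw [← isUnit_iff_isUnit_det, ← mulVec_surjective_iff_isUnit]
  exact LinearMap.range_eq_top.mp hrange

section RightInverse

variable {K κ ι : Type*} [Field K] [LinearOrder K] [IsStrictOrderedRing K]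
  [Fintype κ] [DecidableEq κ] [Fintype ι] {A : Matrix κ ι K}

theorem isUnit_det_mul_transpose (h : A.rank = Fintype.card κ) : IsUnit (A * Aᵀ).det :=
  isUnit_det_of_rank_eq_card (by rw [rank_self_mul_transpose, h])

theorem mul_transpose_mul_inv_eq_one (h : A.rank = Fintype.card κ) :
    A * (Aᵀ * (A * Aᵀ)⁻¹) = 1 := by
  rw [← Matrix.mul_assoc, mul_nonsing_inv _ (isUnit_det_mul_transpose h)]

end RightInverse

theorem mulVec_gwStar {q1 N : ℕ} {Up : Matrix (Fin q1) (Fin N) ℝ} (hUp : Up.rank = q1)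
    (uini : Fin q1 → ℝ) : Up *ᵥ gwStar Up uini = uini := by
  rw [gwStar, mulVec_mulVec, mul_transpose_mul_inv_eq_one (by simpa using hUp), one_mulVec]

theorem mul_eq_zero_of_mulVec_col_eq_zero {R m n l : Type*} [NonUnitalNonAssocSemiring R]
    [Fintype n] {A : Matrix m n R} {M : Matrix n l R} (h : ∀ j, A *ᵥ (fun i => M i j) = 0) :
    A * M = 0 := by
  ext i j
  simpa [mul_apply, mulVec, dotProduct] using congrFun (h j) i

section Blocks

variable {q1 s1 q3 q4 N : ℕ} (Up : Matrix (Fin q1) (Fin N) ℝ) (Yp1 : Matrix (Fin s1) (Fin N) ℝ)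
  (Uf : Matrix (Fin q3) (Fin N) ℝ) (Yf : Matrix (Fin q4) (Fin N) ℝ)

theorem lambdaMat_mulVec (x : Fin N → ℝ) :
    lambdaMat Up Yp1 Uf *ᵥ x = Up *ᵥ x ⊕ᵥ (Yp1 *ᵥ x ⊕ᵥ Uf *ᵥ x) := by
  simp only [lambdaMat, fromRows_mulVec]

noncomputable def withFutureInput (h : Fin N → ℝ) (u : Fin q3 → ℝ) : Fin N → ℝ :=
  h + ((lambdaMat Up Yp1 Uf)ᵀ * (lambdaMat Up Yp1 Uf * (lambdaMat Up Yp1 Uf)ᵀ)⁻¹) *ᵥ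
    ((0 : Fin q1 → ℝ) ⊕ᵥ ((0 : Fin s1 → ℝ) ⊕ᵥ (u - Uf *ᵥ h)))

theorem lambdaMat_mulVec_withFutureInput (hΛ : (lambdaMat Up Yp1 Uf).rank = q1 + s1 + q3)
    (h : Fin N → ℝ) (u : Fin q3 → ℝ) :
    lambdaMat Up Yp1 Uf *ᵥ withFutureInput Up Yp1 Uf h u = Up *ᵥ h ⊕ᵥ (Yp1 *ᵥ h ⊕ᵥ u) := by
  rw [withFutureInput, mulVec_add, mulVec_mulVec,
    mul_transpose_mul_inv_eq_one (by simpa [add_assoc] using hΛ), one_mulVec, lambdaMat_mulVec]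
  ext (i | i | i) <;> simp

theorem mulVec_withFutureInput (h : Fin N → ℝ) (u : Fin q3 → ℝ) :
    Yf *ᵥ withFutureInput Up Yp1 Uf h u = Bu Up Yp1 Uf Yf *ᵥ u + Bini Up Yp1 Uf Yf *ᵥ h := by
  set P := (lambdaMat Up Yp1 Uf)ᵀ * (lambdaMat Up Yp1 Uf * (lambdaMat Up Yp1 Uf)ᵀ)⁻¹
  set Zu := fromRows (0 : Matrix (Fin q1) (Fin q3) ℝ)
    (fromRows (0 : Matrix (Fin s1) _ ℝ) (1 : Matrix (Fin q3) _ ℝ))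
  set Zh := fromRows (0 : Matrix (Fin q1) (Fin N) ℝ) (fromRows (0 : Matrix (Fin s1) _ ℝ) (-Uf))
  -- `Bu` elaborates its product through a `CStarMatrix` instance, invisible to `rw`
  have hBu : Bu Up Yp1 Uf Yf = Yf * (P * Zu) := rfl
  have hBini : Bini Up Yp1 Uf Yf = Yf + Yf * (P * Zh) := by
    rw [Bini, Matrix.mul_add, Matrix.mul_one]
    rfl
  have hblocks : Zu *ᵥ u + Zh *ᵥ h = (0 : Fin q1 → ℝ) ⊕ᵥ ((0 : Fin s1 → ℝ) ⊕ᵥ (u - Uf *ᵥ h)) := by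
    ext (i | i | i) <;> simp [Zu, Zh, fromRows_mulVec, neg_mulVec, sub_eq_add_neg]
  rw [withFutureInput, hBu, hBini, ← hblocks]
  simp only [mulVec_add, add_mulVec, mulVec_mulVec]
  abel

theorem mulVec_eq_of_lambdaMat_mulVec_eq {s2 : ℕ} {Yp2 : Matrix (Fin s2) (Fin N) ℝ}
    (hF : ∃ (F1 : Matrix (Fin s2) (Fin q1) ℝ) (F2 : Matrix (Fin s2) (Fin s1) ℝ),
      Yp2 = F1 * Up + F2 * Yp1)
    (huniq : ∀ g g' : Fin N → ℝ, Up *ᵥ g = Up *ᵥ g' →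
      fromRows Yp1 Yp2 *ᵥ g = fromRows Yp1 Yp2 *ᵥ g' → Uf *ᵥ g = Uf *ᵥ g' → Yf *ᵥ g = Yf *ᵥ g')
    {g g' : Fin N → ℝ} (h : lambdaMat Up Yp1 Uf *ᵥ g = lambdaMat Up Yp1 Uf *ᵥ g') :
    Yf *ᵥ g = Yf *ᵥ g' := by
  obtain ⟨F1, F2, rfl⟩ := hF
  simp only [lambdaMat_mulVec, Sum.elim_eq_iff] at h
  obtain ⟨hUp, hYp1, hUf⟩ := h
  refine huniq g g' hUp ?_ hUf
  simp only [fromRows_mulVec, add_mulVec, ← mulVec_mulVec, hUp, hYp1]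

end Blocks

theorem output_parameterization_general {q1 s1 s2 q3 q4 N nw : ℕ}
    (Up : Matrix (Fin q1) (Fin N) ℝ) (Yp1 : Matrix (Fin s1) (Fin N) ℝ)
    (Yp2 : Matrix (Fin s2) (Fin N) ℝ) (Uf : Matrix (Fin q3) (Fin N) ℝ)
    (Yf : Matrix (Fin q4) (Fin N) ℝ)
    (uini : Fin q1 → ℝ) (yini : Fin s1 ⊕ Fin s2 → ℝ)
    -- (i) `U_p` has full row rank
    (hUp : Up.rank = q1)
    -- (ii) `Λ = [U_p; Y_p1; U_f]` has full row rank
    (hΛ : (lambdaMat Up Yp1 Uf).rank = q1 + s1 + q3)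
    -- (iii) the rows of `Y_p2` are linear combinations of the rows of `[U_p; Y_p1]`
    (hF : ∃ (F1 : Matrix (Fin s2) (Fin q1) ℝ) (F2 : Matrix (Fin s2) (Fin s1) ℝ),
        Yp2 = F1 * Up + F2 * Yp1)
    -- (iv) uniqueness of the predicted output
    (huniq : ∀ g g' : Fin N → ℝ, Up.mulVec g = Up.mulVec g' →
        (Matrix.fromRows Yp1 Yp2).mulVec g = (Matrix.fromRows Yp1 Yp2).mulVec g' →
        Uf.mulVec g = Uf.mulVec g' → Yf.mulVec g = Yf.mulVec g')
    -- the columns of `M` form a basis of `ker U_p`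
    (M : Matrix (Fin N) (Fin nw) ℝ)
    (hMker : ∀ j, Up.mulVec (fun i => M i j) = 0)
    (gw : Fin nw → ℝ) (u : Fin q3 → ℝ)
    -- the parameterized noise `w = -Y_p M g_w + w_0` with `w_0 = -Y_p g_w* + y_ini`
    (w : Fin s1 ⊕ Fin s2 → ℝ)
    (hw : w = -((Matrix.fromRows Yp1 Yp2).mulVec (M.mulVec gw)) +
        (-((Matrix.fromRows Yp1 Yp2).mulVec (gwStar Up uini)) + yini))
    (g : Fin N → ℝ)
    (hg1 : Up.mulVec g = uini)
    (hg2 : Yp1.mulVec g = fun i => (yini - w) (Sum.inl i))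
    (hg4 : Uf.mulVec g = u) :
    Yf.mulVec g = (Bu Up Yp1 Uf Yf).mulVec u +
      (Bini Up Yp1 Uf Yf * M).mulVec gw + (Bini Up Yp1 Uf Yf).mulVec (gwStar Up uini) := by
  set h := M *ᵥ gw + gwStar Up uini
  have hUph : Up *ᵥ h = uini := by
    rw [mulVec_add, mulVec_mulVec, mul_eq_zero_of_mulVec_col_eq_zero hMker, zero_mulVec,
      zero_add, mulVec_gwStar hUp]
  have hYp1 : Yp1 *ᵥ g = Yp1 *ᵥ h := by
    rw [hg2, hw]
    ext i
    simp only [h, fromRows_mulVec, mulVec_add, Pi.sub_apply, Pi.add_apply, Pi.neg_apply,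
      Sum.elim_inl]
    ring
  have hΛg : lambdaMat Up Yp1 Uf *ᵥ g = lambdaMat Up Yp1 Uf *ᵥ withFutureInput Up Yp1 Uf h u := by
    rw [lambdaMat_mulVec_withFutureInput Up Yp1 Uf hΛ, lambdaMat_mulVec, hg1, hYp1, hg4, hUph]
  calc Yf *ᵥ g = Yf *ᵥ withFutureInput Up Yp1 Uf h u :=
        mulVec_eq_of_lambdaMat_mulVec_eq Up Yp1 Uf Yf hF huniq hΛg
    _ = Bu Up Yp1 Uf Yf *ᵥ u + Bini Up Yp1 Uf Yf *ᵥ h := mulVec_withFutureInput ..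
    _ = _ := by rw [mulVec_add, mulVec_mulVec, add_assoc]

/-- Output parameterization: for any `g` compatible with the initial data perturbed by
the parameterized noise `w = -Y_p M g_w + w_0` and the input `u`, the output satisfies
`Y_f g = B_u u + B_w g_w + y_0`. -/
theorem output_parameterization {q1 s1 s2 q3 q4 N nw : ℕ}
    (Up : Matrix (Fin q1) (Fin N) ℝ) (Yp1 : Matrix (Fin s1) (Fin N) ℝ)
    (Yp2 : Matrix (Fin s2) (Fin N) ℝ) (Uf : Matrix (Fin q3) (Fin N) ℝ)
    (Yf : Matrix (Fin q4) (Fin N) ℝ)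
    (uini : Fin q1 → ℝ) (yini : Fin s1 ⊕ Fin s2 → ℝ)
    -- (i) `U_p` has full row rank
    (hUp : Up.rank = q1)
    -- (ii) `Λ = [U_p; Y_p1; U_f]` has full row rank
    (hΛ : (lambdaMat Up Yp1 Uf).rank = q1 + s1 + q3)
    -- (iii) the rows of `Y_p2` are linear combinations of the rows of `[U_p; Y_p1]`
    (hF : ∃ (F1 : Matrix (Fin s2) (Fin q1) ℝ) (F2 : Matrix (Fin s2) (Fin s1) ℝ),
        Yp2 = F1 * Up + F2 * Yp1)
    -- (iv) uniqueness of the predicted output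
    (huniq : ∀ g g' : Fin N → ℝ, Up.mulVec g = Up.mulVec g' →
        (Matrix.fromRows Yp1 Yp2).mulVec g = (Matrix.fromRows Yp1 Yp2).mulVec g' →
        Uf.mulVec g = Uf.mulVec g' → Yf.mulVec g = Yf.mulVec g')
    -- the columns of `M` form a basis of `ker U_p`
    (M : Matrix (Fin N) (Fin nw) ℝ)
    (hMker : ∀ j, Up.mulVec (fun i => M i j) = 0)
    (hMindep : LinearIndependent ℝ (fun (j : Fin nw) (i : Fin N) => M i j))
    (hMspan : ∀ g : Fin N → ℝ, Up.mulVec g = 0 → ∃ c : Fin nw → ℝ, g = M.mulVec c)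
    (gw : Fin nw → ℝ) (u : Fin q3 → ℝ)
    -- the parameterized noise `w = -Y_p M g_w + w_0` with `w_0 = -Y_p g_w* + y_ini`
    (w : Fin s1 ⊕ Fin s2 → ℝ)
    (hw : w = -((Matrix.fromRows Yp1 Yp2).mulVec (M.mulVec gw)) +
        (-((Matrix.fromRows Yp1 Yp2).mulVec (gwStar Up uini)) + yini))
    (g : Fin N → ℝ)
    (hg1 : Up.mulVec g = uini)
    (hg2 : Yp1.mulVec g = fun i => (yini - w) (Sum.inl i))
    (hg3 : Yp2.mulVec g = fun i => (yini - w) (Sum.inr i))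
    (hg4 : Uf.mulVec g = u) :
    Yf.mulVec g = (Bu Up Yp1 Uf Yf).mulVec u +
      (Bini Up Yp1 Uf Yf * M).mulVec gw + (Bini Up Yp1 Uf Yf).mulVec (gwStar Up uini) :=
  output_parameterization_general Up Yp1 Yp2 Uf Yf uini yini hUp hΛ hF huniq M hMker gw u w hw g hg1
    hg2 hg4
end

section
/- Schur complement step: Let B_u ∈ ℝ^{q_4×q_3}, B_w ∈ ℝ^{q_4×n_w}, y_0, r ∈ ℝ^{q_4}, let Q̄ ∈ ℝ^{q_4×q_4} and R̄ ∈ ℝ^{q_3×q_3} be symmetric positive semidefinite with K := R̄ + B_u^⊤Q̄B_u positive definite, let A_w be a symmetric (1+n_w)×(1+n_w) matrix, and let α ≥ 0, u ∈ ℝ^{q_3}, γ ∈ ℝ. Then the block matrix [[K^{−1}, [u, 0]],[[u, 0]^⊤, Q_g^a(u, γ) − α A_w]] is positive semidefinite if and only if Q_g(u, γ) − α A_w is positive semidefinite, where [u, 0] ∈ ℝ^{q_3×(1+n_w)} denotes the matrix whose first column is u and whose remaining n_w columns are zero. -/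
/-!
Taking the Schur complement of the positive definite corner `K⁻¹`, `K = R̄ + B_uᵀ Q̄ B_u`, the
block matrix is positive semidefinite iff `Q_g^a(u, γ) - α A_w - [u, 0]ᵀ K [u, 0]` is. The
correction `[u, 0]ᵀ K [u, 0]` vanishes outside the top-left entry, where it equals
`uᵀ R̄ u + (B_u u)ᵀ Q̄ (B_u u)`: exactly the quadratic terms that `Q_g^a` omits from the top-left
entry of `Q_g`.
-/

open Matrix

/-- The matrix `Q_g(u, γ)`. -/
noncomputable def Qg {q3 q4 nw : ℕ} (Bu : Matrix (Fin q4) (Fin q3) ℝ)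
    (Bw : Matrix (Fin q4) (Fin nw) ℝ) (y0 r : Fin q4 → ℝ)
    (Qbar : Matrix (Fin q4) (Fin q4) ℝ) (Rbar : Matrix (Fin q3) (Fin q3) ℝ)
    (u : Fin q3 → ℝ) (γ : ℝ) : Matrix (Fin 1 ⊕ Fin nw) (Fin 1 ⊕ Fin nw) ℝ :=
  let z : Fin q4 → ℝ := Bu.mulVec u + y0 - r
  Matrix.fromBlocks
    (Matrix.of fun _ _ => γ - u ⬝ᵥ Rbar.mulVec u - z ⬝ᵥ Qbar.mulVec z)
    (Matrix.of fun _ j => -(z ᵥ* (Qbar * Bw)) j)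
    (Matrix.of fun i _ => -((Bwᵀ * Qbar).mulVec z) i)
    (-(Bwᵀ * Qbar * Bw))

/-- The matrix `Q_g^a(u, γ)`. -/
noncomputable def Qga {q3 q4 nw : ℕ} (Bu : Matrix (Fin q4) (Fin q3) ℝ)
    (Bw : Matrix (Fin q4) (Fin nw) ℝ) (y0 r : Fin q4 → ℝ)
    (Qbar : Matrix (Fin q4) (Fin q4) ℝ)
    (u : Fin q3 → ℝ) (γ : ℝ) : Matrix (Fin 1 ⊕ Fin nw) (Fin 1 ⊕ Fin nw) ℝ :=
  let z : Fin q4 → ℝ := Bu.mulVec u + y0 - r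
  Matrix.fromBlocks
    (Matrix.of fun _ _ => γ - Bu.mulVec u ⬝ᵥ Qbar.mulVec (y0 - r)
      - (y0 - r) ⬝ᵥ Qbar.mulVec (Bu.mulVec u) - (y0 - r) ⬝ᵥ Qbar.mulVec (y0 - r))
    (Matrix.of fun _ j => -(z ᵥ* (Qbar * Bw)) j)
    (Matrix.of fun i _ => -((Bwᵀ * Qbar).mulVec z) i)
    (-(Bwᵀ * Qbar * Bw))

/-- The matrix `[u, 0] ∈ ℝ^{q3 × (1 + nw)}` whose first column is `u` and whose
remaining columns are zero. -/
def uZero {q3 nw : ℕ} (u : Fin q3 → ℝ) : Matrix (Fin q3) (Fin 1 ⊕ Fin nw) ℝ :=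
  Matrix.fromCols (Matrix.of fun i _ => u i) 0

namespace Matrix

variable {m n K : Type*} [Fintype m] [Fintype n] [DecidableEq m]
  [Field K] [PartialOrder K] [StarRing K] [StarOrderedRing K]

theorem PosDef.posSemidef_fromBlocks_inv_iff {A : Matrix m m K} (hA : A.PosDef)
    (B : Matrix m n K) (D : Matrix n n K) :
    (fromBlocks A⁻¹ B Bᴴ D).PosSemidef ↔ (D - Bᴴ * A * B).PosSemidef := by
  have := hA.isUnit.invertible
  have := hA.inv.isUnit.invertible
  rw [hA.inv.fromBlocks₁₁ B D, inv_inv_of_invertible]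

omit [DecidableEq m] in
theorem dotProduct_transpose_mul_mul_mulVec {R : Type*} [CommSemiring R]
    (B : Matrix m n R) (Q : Matrix m m R) (u : n → R) :
    u ⬝ᵥ (Bᵀ * Q * B) *ᵥ u = B *ᵥ u ⬝ᵥ Q *ᵥ (B *ᵥ u) := by
  rw [← mulVec_mulVec, ← mulVec_mulVec, dotProduct_mulVec, vecMul_transpose]

end Matrix

theorem uZero_transpose_mul_mul_uZero {q3 nw : ℕ} (u : Fin q3 → ℝ)
    (M : Matrix (Fin q3) (Fin q3) ℝ) :
    (uZero (nw := nw) u)ᵀ * M * uZero (nw := nw) u =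
      fromBlocks (of fun _ _ => u ⬝ᵥ M *ᵥ u) 0 0 0 := by
  rw [uZero, transpose_fromCols, transpose_zero, fromRows_mul, Matrix.zero_mul,
    fromRows_mul_fromCols, Matrix.zero_mul, Matrix.zero_mul, Matrix.mul_zero]
  congr 1
  ext
  rw [Matrix.mul_assoc]
  simp only [mul_apply', of_apply]
  rfl

theorem Qga_sub_eq_Qg {q3 q4 nw : ℕ} (Bu : Matrix (Fin q4) (Fin q3) ℝ)
    (Bw : Matrix (Fin q4) (Fin nw) ℝ) (y0 r : Fin q4 → ℝ)
    (Qbar : Matrix (Fin q4) (Fin q4) ℝ) (Rbar : Matrix (Fin q3) (Fin q3) ℝ)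
    (u : Fin q3 → ℝ) (γ : ℝ) :
    Qga Bu Bw y0 r Qbar u γ - (uZero u)ᵀ * (Rbar + Buᵀ * Qbar * Bu) * uZero u =
      Qg Bu Bw y0 r Qbar Rbar u γ := by
  have hK : u ⬝ᵥ (Rbar + Buᵀ * Qbar * Bu) *ᵥ u =
      u ⬝ᵥ Rbar *ᵥ u + Bu *ᵥ u ⬝ᵥ Qbar *ᵥ (Bu *ᵥ u) := by
    rw [add_mulVec, dotProduct_add, dotProduct_transpose_mul_mul_mulVec]
  have hQ : (Bu *ᵥ u + y0 - r) ⬝ᵥ Qbar *ᵥ (Bu *ᵥ u + y0 - r) =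
      Bu *ᵥ u ⬝ᵥ Qbar *ᵥ (Bu *ᵥ u) + Bu *ᵥ u ⬝ᵥ Qbar *ᵥ (y0 - r)
        + (y0 - r) ⬝ᵥ Qbar *ᵥ (Bu *ᵥ u) + (y0 - r) ⬝ᵥ Qbar *ᵥ (y0 - r) := by
    rw [add_sub_assoc, mulVec_add, dotProduct_add, add_dotProduct, add_dotProduct]
    ring
  rw [uZero_transpose_mul_mul_uZero, Qg, Qga, sub_eq_add_neg, fromBlocks_neg, fromBlocks_add]
  simp only [neg_zero, add_zero]
  congr 1
  ext
  simp only [Matrix.add_apply, Matrix.neg_apply, of_apply, hK, hQ]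
  ring

theorem schur_complement_step_general {q3 q4 nw : ℕ}
    (Bu : Matrix (Fin q4) (Fin q3) ℝ) (Bw : Matrix (Fin q4) (Fin nw) ℝ)
    (y0 r : Fin q4 → ℝ)
    (Qbar : Matrix (Fin q4) (Fin q4) ℝ) (Rbar : Matrix (Fin q3) (Fin q3) ℝ)
    (hK : (Rbar + Buᵀ * Qbar * Bu).PosDef)
    (Aw : Matrix (Fin 1 ⊕ Fin nw) (Fin 1 ⊕ Fin nw) ℝ)
    (α : ℝ) (u : Fin q3 → ℝ) (γ : ℝ) :
    (Matrix.fromBlocks (Rbar + Buᵀ * Qbar * Bu)⁻¹ (uZero u) (uZero u)ᵀ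
        (Qga Bu Bw y0 r Qbar u γ - α • Aw)).PosSemidef ↔
    (Qg Bu Bw y0 r Qbar Rbar u γ - α • Aw).PosSemidef := by
  have hT : (uZero u : Matrix (Fin q3) (Fin 1 ⊕ Fin nw) ℝ)ᵀ = (uZero u)ᴴ :=
    (conjTranspose_eq_transpose_of_trivial _).symm
  rw [hT, hK.posSemidef_fromBlocks_inv_iff, ← hT, sub_right_comm, Qga_sub_eq_Qg]

/-- Schur complement step: the block matrix `[[K⁻¹, [u, 0]], [[u, 0]ᵀ, Q_g^a - α A_w]]`
is positive semidefinite iff `Q_g - α A_w` is positive semidefinite. -/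
theorem schur_complement_step {q3 q4 nw : ℕ}
    (Bu : Matrix (Fin q4) (Fin q3) ℝ) (Bw : Matrix (Fin q4) (Fin nw) ℝ)
    (y0 r : Fin q4 → ℝ)
    (Qbar : Matrix (Fin q4) (Fin q4) ℝ) (Rbar : Matrix (Fin q3) (Fin q3) ℝ)
    (hQ : Qbar.PosSemidef) (hR : Rbar.PosSemidef)
    (hK : (Rbar + Buᵀ * Qbar * Bu).PosDef)
    (Aw : Matrix (Fin 1 ⊕ Fin nw) (Fin 1 ⊕ Fin nw) ℝ) (hAw : Aw.IsSymm)
    (α : ℝ) (hα : 0 ≤ α) (u : Fin q3 → ℝ) (γ : ℝ) :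
    (Matrix.fromBlocks (Rbar + Buᵀ * Qbar * Bu)⁻¹ (uZero u) (uZero u)ᵀ
        (Qga Bu Bw y0 r Qbar u γ - α • Aw)).PosSemidef ↔
    (Qg Bu Bw y0 r Qbar Rbar u γ - α • Aw).PosSemidef :=
  schur_complement_step_general Bu Bw y0 r Qbar Rbar hK Aw α u γ
end

section
/- LMI reformulation of the robust performance constraint (Theorem 1): Let B_u ∈ ℝ^{q_4×q_3}, B_w ∈ ℝ^{q_4×n_w}, y_0, r ∈ ℝ^{q_4}, let Q̄ ∈ ℝ^{q_4×q_4} and R̄ ∈ ℝ^{q_3×q_3} be symmetric positive semidefinite with K := R̄ + B_u^⊤Q̄B_u positive definite, let A_w be a symmetric (1+n_w)×(1+n_w) matrix, and suppose the Slater condition holds: there exists ĝ_w ∈ ℝ^{n_w} with [1; ĝ_w]^⊤ A_w [1; ĝ_w] > 0. Then for any u ∈ ℝ^{q_3} and γ ∈ ℝ, the following are equivalent: (a) for every g_w ∈ ℝ^{n_w} with [1; g_w]^⊤ A_w [1; g_w] ≥ 0, it holds that (B_u u + B_w g_w + y_0 − r)^⊤ Q̄ (B_u u + B_w g_w + y_0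 − r) + u^⊤ R̄ u ≤ γ; (b) there exists α ≥ 0 such that the block matrix [[K^{−1}, [u, 0]],[[u, 0]^⊤, Q_g^a(u, γ) − α A_w]] is positive semidefinite, where [u, 0] ∈ ℝ^{q_3×(1+n_w)} denotes the matrix whose first column is u and whose remaining n_w columns are zero. -/
/-!
The Schur complement with respect to the block `K⁻¹` turns the LMI into
`(Q_g^a(u, γ) - [u, 0]ᵀ K [u, 0]) - α A_w ⪰ 0`, and the quadratic form of
`Q_g^a(u, γ) - [u, 0]ᵀ K [u, 0]` at `[1; g_w]` is `γ` minus the cost at `g_w`. The theorem is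
therefore the S-lemma on the affine slice `x₀ = 1`.

The Slater point reduces the affine implication to the homogeneous one: a point with `x₀ = 0` is a
limit of points `x + t • ĝ` off the slice on which the constraint still holds. The homogeneous
S-lemma follows from Dines' theorem that the joint range of two quadratic forms is convex: this
range is a cone disjoint from the open quadrant `{a > 0, b < 0}`, and a separating functional
`c a + d b` has `c ≤ 0 < d`, so `α = -c / d` works. Dines' theorem itself reduces, after a rotation
of the plane, to an intermediate value argument along a level set of one of the two forms.
-/

open Matrix

open Set

namespace QuadraticMap

variable {V : Type*} [AddCommGroup V] [Module ℝ V]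

theorem map_smul_add_smul (Q : QuadraticForm ℝ V) (s t : ℝ) (x y : V) :
    Q (s • x + t • y) = s ^ 2 * Q x + t ^ 2 * Q y + s * t * polar Q x y := by
  rw [QuadraticMap.map_add (⇑Q), QuadraticMap.map_smul, QuadraticMap.map_smul, polar_smul_left,
    polar_smul_right]
  simp only [smul_eq_mul]
  ring

theorem map_add_smul (Q : QuadraticForm ℝ V) (t : ℝ) (x y : V) :
    Q (x + t • y) = Q x + t ^ 2 * Q y + t * polar Q x y := by
  simpa using map_smul_add_smul Q 1 t x y

theorem map_sqrt_smul (Q : QuadraticForm ℝ V) {c : ℝ} (hc : 0 ≤ c) (x : V) :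
    Q (√c • x) = c * Q x := by
  rw [QuadraticMap.map_smul, Real.mul_self_sqrt hc, smul_eq_mul]

theorem intermediate_value_on_level_of_isotropic (Q₁ Q₂ : QuadraticForm ℝ V) {x y : V}
    (hx : Q₁ x = 0) (hy : Q₁ y = 0) {m : ℝ} (hm : m ∈ uIcc (Q₂ x) (Q₂ y)) :
    ∃ z, Q₁ z = 0 ∧ Q₂ z = m := by
  have rescale : ∀ v, Q₁ v = 0 → 0 < m * Q₂ v → ∃ z, Q₁ z = 0 ∧ Q₂ z = m := by
    intro v hv hmv
    have hc : 0 ≤ m / Q₂ v := by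
      rcases mul_pos_iff.mp hmv with h | h
      · exact (div_pos h.1 h.2).le
      · exact (div_pos_of_neg_of_neg h.1 h.2).le
    refine ⟨√(m / Q₂ v) • v, by rw [map_sqrt_smul _ hc, hv, mul_zero], ?_⟩
    rw [map_sqrt_smul _ hc, div_mul_cancel₀ _ (right_ne_zero_of_mul hmv.ne')]
  rcases eq_or_ne m 0 with rfl | hm0
  · exact ⟨0, map_zero Q₁, map_zero Q₂⟩
  have : 0 < m * Q₂ x ∨ 0 < m * Q₂ y := by
    by_contra! h
    rcases mem_uIcc.mp hm with h' | h' <;> rcases hm0.lt_or_gt with h'' | h'' <;> nlinarith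
  rcases this with h | h
  exacts [rescale x hx h, rescale y hy h]

theorem intermediate_value_on_level_of_pos (Q₁ Q₂ : QuadraticForm ℝ V) {x y : V}
    (hpos : 0 < Q₁ x) (hxy : Q₁ x = Q₁ y) (hpolar : 0 ≤ polar Q₁ x y) {m : ℝ}
    (hm : m ∈ uIcc (Q₂ x) (Q₂ y)) :
    ∃ z, Q₁ z = Q₁ x ∧ Q₂ z = m := by
  set p : ℝ → V := fun t => (1 - t) • x + t • y
  have hcont : ∀ Q : QuadraticForm ℝ V, Continuous fun t => Q (p t) := by
    intro Q
    simp only [p, map_smul_add_smul]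
    fun_prop
  have hp_pos : ∀ t ∈ Icc (0 : ℝ) 1, 0 < Q₁ (p t) := by
    rintro t ⟨ht0, ht1⟩
    simp only [p, map_smul_add_smul, ← hxy]
    nlinarith [mul_nonneg (mul_nonneg (sub_nonneg.mpr ht1) ht0) hpolar, sq_nonneg (2 * t - 1)]
  -- `φ t` is the value of `Q₂` once `p t` is rescaled onto the level set `Q₁ = Q₁ x`
  set φ : ℝ → ℝ := fun t => Q₁ x / Q₁ (p t) * Q₂ (p t)
  have hφ : ContinuousOn φ (uIcc 0 1) := by
    rw [uIcc_of_le zero_le_one]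
    exact (continuousOn_const.div (hcont Q₁).continuousOn fun t ht => (hp_pos t ht).ne').mul
      (hcont Q₂).continuousOn
  have hφ0 : φ 0 = Q₂ x := by simp [φ, p, hpos.ne']
  have hφ1 : φ 1 = Q₂ y := by simp [φ, p, hxy, (hxy ▸ hpos).ne']
  obtain ⟨t, ht, hφt⟩ := intermediate_value_uIcc hφ (hφ0 ▸ hφ1 ▸ hm)
  rw [uIcc_of_le zero_le_one] at ht
  have hc : 0 ≤ Q₁ x / Q₁ (p t) := div_nonneg hpos.le (hp_pos t ht).le
  refine ⟨√(Q₁ x / Q₁ (p t)) • p t, ?_, ?_⟩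
  · rw [map_sqrt_smul _ hc, div_mul_cancel₀ _ (hp_pos t ht).ne']
  · rw [map_sqrt_smul _ hc, ← hφt]

theorem intermediate_value_on_level (Q₁ Q₂ : QuadraticForm ℝ V) {x y : V} (hxy : Q₁ x = Q₁ y)
    {m : ℝ} (hm : m ∈ uIcc (Q₂ x) (Q₂ y)) : ∃ z, Q₁ z = Q₁ x ∧ Q₂ z = m := by
  have of_pos : ∀ Q : QuadraticForm ℝ V, 0 < Q x → Q x = Q y → ∃ z, Q z = Q x ∧ Q₂ z = m := by
    intro Q hpos hQxy
    rcases le_total 0 (polar Q x y) with h | h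
    · exact intermediate_value_on_level_of_pos Q Q₂ hpos hQxy h hm
    · refine intermediate_value_on_level_of_pos Q Q₂ (y := -y) hpos
        (by rwa [QuadraticMap.map_neg]) ?_ (by rwa [QuadraticMap.map_neg])
      rw [polar_neg_right]
      exact neg_nonneg.mpr h
  rcases lt_trichotomy (Q₁ x) 0 with h | h | h
  · obtain ⟨z, hz, hz₂⟩ := of_pos (-Q₁) (by simpa using h) (by simpa using hxy)
    exact ⟨z, by simpa using hz, hz₂⟩
  · rw [h]
    exact intermediate_value_on_level_of_isotropic Q₁ Q₂ h (hxy ▸ h) hm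
  · exact of_pos Q₁ h hxy

theorem convex_range_pair (Q₁ Q₂ : QuadraticForm ℝ V) :
    Convex ℝ (range fun x => (Q₁ x, Q₂ x)) := by
  rintro _ ⟨x, rfl⟩ _ ⟨y, rfl⟩ s t hs ht hst
  -- rotate the plane so that the two endpoints lie on a common level line of the first form
  set c := Q₂ x - Q₂ y
  set d := Q₁ y - Q₁ x
  by_cases hcd : c = 0 ∧ d = 0
  · refine ⟨x, Prod.ext ?_ ?_⟩ <;> simp only [Prod.smul_mk, Prod.mk_add_mk, smul_eq_mul]
    · linear_combination (-Q₁ x) * hst - t * hcd.2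
    · linear_combination (-Q₂ x) * hst + t * hcd.1
  have hcd' : c ^ 2 + d ^ 2 ≠ 0 := fun h => hcd ⟨by nlinarith, by nlinarith⟩
  have hm : s * (-d * Q₁ x + c * Q₂ x) + t * (-d * Q₁ y + c * Q₂ y) ∈
      uIcc (-d * Q₁ x + c * Q₂ x) (-d * Q₁ y + c * Q₂ y) := by
    rw [← segment_eq_uIcc]
    exact ⟨s, t, hs, ht, hst, rfl⟩
  obtain ⟨z, hz₁, hz₂⟩ :=
    intermediate_value_on_level (c • Q₁ + d • Q₂) (-d • Q₁ + c • Q₂) (x := x) (y := y)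
      (by simp only [_root_.add_apply, _root_.smul_apply, smul_eq_mul, c, d]; ring)
      (by simpa using hm)
  simp only [_root_.add_apply, _root_.smul_apply, smul_eq_mul] at hz₁ hz₂
  refine ⟨z, Prod.ext ?_ ?_⟩ <;> simp only [Prod.smul_mk, Prod.mk_add_mk, smul_eq_mul]
  · refine mul_left_cancel₀ hcd' ?_
    linear_combination c * hz₁ - d * hz₂ - (c ^ 2 * Q₁ x + c * d * Q₂ x) * hst
  · refine mul_left_cancel₀ hcd' ?_
    linear_combination d * hz₁ + c * hz₂ - (c * d * Q₁ x + d ^ 2 * Q₂ x) * hst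

theorem s_lemma (A M : QuadraticForm ℝ V) (hslater : ∃ x, 0 < A x)
    (h : ∀ x, 0 ≤ A x → 0 ≤ M x) : ∃ α : ℝ, 0 ≤ α ∧ ∀ x, α * A x ≤ M x := by
  set U : Set (ℝ × ℝ) := Ioi 0 ×ˢ Iio 0
  have hdisj : Disjoint U (range fun x => (A x, M x)) := by
    rw [disjoint_left]
    rintro _ ⟨hA, hM⟩ ⟨x, rfl⟩
    exact (not_lt.mpr (h x (le_of_lt hA))) hM
  obtain ⟨f, ub, hfU, hfW⟩ := geometric_hahn_banach_open ((convex_Ioi 0).prod (convex_Iio 0))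
    (isOpen_Ioi.prod isOpen_Iio) (convex_range_pair A M) hdisj
  set c := f (1, 0)
  set d := f (0, 1)
  have hf : ∀ p : ℝ × ℝ, f p = c * p.1 + d * p.2 := by
    rintro ⟨a, b⟩
    rw [show ((a, b) : ℝ × ℝ) = a • (1, 0) + b • (0, 1) by simp, map_add, map_smul, map_smul,
      smul_eq_mul, smul_eq_mul]
    simp only [Prod.smul_mk, Prod.mk_add_mk, smul_eq_mul]
    ring
  have hub : ub ≤ 0 := by simpa [hf] using hfW _ ⟨0, rfl⟩
  have hfU' : ∀ p ∈ closure U, f p ≤ ub :=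
    fun p hp => closure_lt_subset_le f.continuous continuous_const
      (closure_mono hfU hp)
  have hclosure : closure U = Ici 0 ×ˢ Iic 0 := by
    rw [closure_prod_eq, closure_Ioi, closure_Iio]
  have hc : c ≤ 0 := (hfU' (1, 0) (by simp [hclosure])).trans hub
  have hd : 0 ≤ d := by
    have := (hfU' (0, -1) (by simp [hclosure])).trans hub
    rw [hf] at this
    linarith
  -- the range of `(A, M)` is a cone, so a functional bounded below on it is nonnegative
  have hW : ∀ x, 0 ≤ c * A x + d * M x := by
    intro x
    by_contra! hneg
    set v := c * A x + d * M x
    have hk : 0 ≤ ub / v + 1 := by linarith [div_nonneg_of_nonpos hub hneg.le]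
    have hscaled := hfW _ ⟨√(ub / v + 1) • x, rfl⟩
    simp only [hf, map_sqrt_smul _ hk] at hscaled
    have : ub ≤ (ub / v + 1) * v := by linarith
    rw [add_mul, div_mul_cancel₀ _ hneg.ne, one_mul] at this
    linarith
  have hd' : 0 < d := by
    refine hd.lt_of_ne fun hd0 => ?_
    obtain ⟨x, hx⟩ := hslater
    have h1 : c - d < ub := by
      simpa [hf, sub_eq_add_neg] using hfU (1, -1) (by simp)
    have h2 := hW x
    rw [← hd0, zero_mul, add_zero] at h2
    nlinarith
  refine ⟨-c / d, div_nonneg (neg_nonneg.mpr hc) hd, fun x => ?_⟩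
  rw [div_mul_eq_mul_div, div_le_iff₀ hd']
  linarith [hW x]

theorem nonneg_of_nonneg_on_hyperplane (A M : QuadraticForm ℝ V) (f : V →ₗ[ℝ] ℝ)
    (hslater : ∃ y, f y = 1 ∧ 0 < A y) (h : ∀ x, f x = 1 → 0 ≤ A x → 0 ≤ M x) :
    ∀ x, 0 ≤ A x → 0 ≤ M x := by
  have off_kernel : ∀ x, f x ≠ 0 → 0 ≤ A x → 0 ≤ M x := by
    intro x hfx hx
    have hpos : 0 < (f x)⁻¹ * (f x)⁻¹ := mul_self_pos.mpr (inv_ne_zero hfx)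
    have h' := h ((f x)⁻¹ • x) (by rw [map_smul, smul_eq_mul, inv_mul_cancel₀ hfx])
      (by rw [QuadraticMap.map_smul, smul_eq_mul]; positivity)
    rw [QuadraticMap.map_smul, smul_eq_mul] at h'
    exact nonneg_of_mul_nonneg_right h' hpos
  obtain ⟨y, hfy, hy⟩ := hslater
  -- on the kernel of `f`, approach `x` by the points `x + t • y`, which lie off the kernel
  have on_kernel : ∀ x, f x = 0 → 0 ≤ A x → 0 ≤ polar A x y → 0 ≤ M x := by
    intro x hfx hx hpolar
    have hlim :
        Filter.Tendsto (fun t : ℝ => M (x + t • y)) (nhdsWithin 0 (Ioi 0)) (nhds (M x)) := by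
      simp only [map_add_smul]
      simpa using ((show Continuous fun t : ℝ => M x + t ^ 2 * M y + t * polar M x y by
        fun_prop).tendsto 0).mono_left nhdsWithin_le_nhds
    refine ge_of_tendsto hlim (eventually_nhdsWithin_of_forall fun t (ht : 0 < t) => ?_)
    refine off_kernel _ (by simp [hfx, hfy, ht.ne']) ?_
    rw [map_add_smul]
    positivity
  intro x hx
  by_cases hfx : f x = 0
  · rcases le_total 0 (polar A x y) with hpolar | hpolar
    · exact on_kernel x hfx hx hpolar
    · simpa using on_kernel (-x) (by simp [hfx]) (by simpa using hx)
        (by rw [polar_neg_left]; exact neg_nonneg.mpr hpolar)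
  · exact off_kernel x hfx hx

end QuadraticMap

theorem Matrix.toQuadraticForm'_apply {R n : Type*} [CommRing R] [Fintype n] [DecidableEq n]
    (M : Matrix n n R) (x : n → R) : M.toQuadraticForm' x = x ⬝ᵥ M *ᵥ x := by
  simp [toQuadraticForm', toLinearMap₂'_apply']

theorem Matrix.isSymm_transpose_mul_mul {α m n : Type*} [CommSemiring α] [Fintype m]
    {K : Matrix m m α} (hK : K.IsSymm) (P : Matrix m n α) : (Pᵀ * K * P).IsSymm := by
  rw [IsSymm, transpose_mul, transpose_mul, transpose_transpose, hK.eq, Matrix.mul_assoc]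

theorem Matrix.dotProduct_transpose_mul_mul_mulVec_s11 {α m n : Type*} [CommSemiring α] [Fintype m]
    [Fintype n] (K : Matrix m m α) (P : Matrix m n α) (v : n → α) :
    v ⬝ᵥ (Pᵀ * K * P) *ᵥ v = (P *ᵥ v) ⬝ᵥ K *ᵥ (P *ᵥ v) := by
  rw [← mulVec_mulVec, ← mulVec_mulVec, dotProduct_mulVec, vecMul_transpose]

theorem Matrix.PosDef.posSemidef_fromBlocks_inv_iff_s11 {m n : Type*} [Fintype m] [DecidableEq m]
    [Fintype n] {K : Matrix m m ℝ} (hK : K.PosDef) (P : Matrix m n ℝ) (D : Matrix n n ℝ) :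
    (fromBlocks K⁻¹ P Pᵀ D).PosSemidef ↔ (D - Pᵀ * K * P).PosSemidef := by
  have : Invertible K⁻¹ := invertibleOfIsUnitDet _ hK.inv.det_pos.ne'.isUnit
  simpa [Matrix.nonsing_inv_nonsing_inv K hK.det_pos.ne'.isUnit] using
    PosDef.fromBlocks₁₁ P D hK.inv

theorem Matrix.sumElim_dotProduct_fromBlocks_mulVec {α ι : Type*} [CommSemiring α] [Fintype ι]
    (a : α) (b c : ι → α) (D : Matrix ι ι α) (g : ι → α) :
    Sum.elim (fun _ : Fin 1 => 1) g ⬝ᵥ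
        fromBlocks (of fun (_ : Fin 1) (_ : Fin 1) => a) (of fun _ j => b j) (of fun i _ => c i) D
          *ᵥ Sum.elim (fun _ => 1) g =
      a + b ⬝ᵥ g + g ⬝ᵥ c + g ⬝ᵥ D *ᵥ g := by
  simp only [fromBlocks_mulVec, sumElim_dotProduct_sumElim, dotProduct_add]
  simp [dotProduct, mulVec]
  ring

theorem Matrix.exists_posSemidef_sub_smul_iff {ι : Type*} [Fintype ι]
    {A M : Matrix (Fin 1 ⊕ ι) (Fin 1 ⊕ ι) ℝ} (hA : A.IsSymm) (hM : M.IsSymm)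
    (hslater : ∃ g : ι → ℝ, 0 < Sum.elim (fun _ => 1) g ⬝ᵥ A *ᵥ Sum.elim (fun _ => 1) g) :
    (∀ g : ι → ℝ, 0 ≤ Sum.elim (fun _ => 1) g ⬝ᵥ A *ᵥ Sum.elim (fun _ => 1) g →
        0 ≤ Sum.elim (fun _ => 1) g ⬝ᵥ M *ᵥ Sum.elim (fun _ => 1) g) ↔
      ∃ α : ℝ, 0 ≤ α ∧ (M - α • A).PosSemidef := by
  have hquad : ∀ (α : ℝ) (x : Fin 1 ⊕ ι → ℝ),
      star x ⬝ᵥ (M - α • A) *ᵥ x = x ⬝ᵥ M *ᵥ x - α * (x ⬝ᵥ A *ᵥ x) := by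
    intro α x
    rw [star_trivial, sub_mulVec, smul_mulVec, dotProduct_sub, dotProduct_smul, smul_eq_mul]
  constructor
  · intro h
    classical
    have hslice : ∀ x : Fin 1 ⊕ ι → ℝ, x (Sum.inl 0) = 1 →
        x = Sum.elim (fun _ => 1) (x ∘ Sum.inr) := by
      intro x hx
      ext (i | i)
      · rwa [Subsingleton.elim i 0]
      · rfl
    obtain ⟨g, hg⟩ := hslater
    obtain ⟨α, hα, hle⟩ := QuadraticMap.s_lemma A.toQuadraticForm' M.toQuadraticForm'
      ⟨_, by rwa [toQuadraticForm'_apply]⟩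
      (QuadraticMap.nonneg_of_nonneg_on_hyperplane _ _ (LinearMap.proj (Sum.inl 0))
        ⟨_, rfl, by rwa [toQuadraticForm'_apply]⟩ fun x hx => by
          simp only [LinearMap.proj_apply] at hx
          simpa only [toQuadraticForm'_apply, ← hslice x hx] using h (x ∘ Sum.inr))
    refine ⟨α, hα, .of_dotProduct_mulVec_nonneg (isHermitian_iff_isSymm.mpr (hM.sub (hA.smul α)))
      fun x => ?_⟩
    rw [hquad, sub_nonneg]
    simpa only [toQuadraticForm'_apply] using hle x
  · rintro ⟨α, hα, hpsd⟩ g hg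
    have := hpsd.dotProduct_mulVec_nonneg (Sum.elim (fun _ => 1) g)
    rw [hquad, sub_nonneg] at this
    exact (mul_nonneg hα hg).trans this

theorem Qga_isSymm {q3 q4 nw : ℕ} (Bu : Matrix (Fin q4) (Fin q3) ℝ)
    (Bw : Matrix (Fin q4) (Fin nw) ℝ) (y0 r : Fin q4 → ℝ) {Qbar : Matrix (Fin q4) (Fin q4) ℝ}
    (hQ : Qbar.IsSymm) (u : Fin q3 → ℝ) (γ : ℝ) : (Qga Bu Bw y0 r Qbar u γ).IsSymm := by
  refine IsSymm.fromBlocks (IsSymm.ext fun _ _ => rfl) ?_ ?_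
  · ext i j
    simp [← mulVec_transpose, hQ.eq]
  · exact (Matrix.isSymm_transpose_mul_mul hQ Bw).neg

theorem dotProduct_Qga_mulVec {q3 q4 nw : ℕ} (Bu : Matrix (Fin q4) (Fin q3) ℝ)
    (Bw : Matrix (Fin q4) (Fin nw) ℝ) (y0 r : Fin q4 → ℝ) (Qbar : Matrix (Fin q4) (Fin q4) ℝ)
    (u : Fin q3 → ℝ) (γ : ℝ) (g : Fin nw → ℝ) :
    Sum.elim (fun _ => 1) g ⬝ᵥ Qga Bu Bw y0 r Qbar u γ *ᵥ Sum.elim (fun _ => 1) g =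
      γ + Bu *ᵥ u ⬝ᵥ Qbar *ᵥ (Bu *ᵥ u) -
        (Bu *ᵥ u + Bw *ᵥ g + y0 - r) ⬝ᵥ Qbar *ᵥ (Bu *ᵥ u + Bw *ᵥ g + y0 - r) := by
  simp only [Qga, Matrix.sumElim_dotProduct_fromBlocks_mulVec, ← Pi.neg_def, neg_dotProduct,
    dotProduct_neg, neg_mulVec]
  rw [← dotProduct_mulVec, ← mulVec_mulVec, ← mulVec_mulVec, dotProduct_mulVec g,
    vecMul_transpose, Matrix.dotProduct_transpose_mul_mul_mulVec_s11]
  simp only [mulVec_add, mulVec_sub, dotProduct_add, dotProduct_sub, add_dotProduct,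
    sub_dotProduct]
  ring

theorem uZero_mulVec_sumElim {q3 nw : ℕ} (u : Fin q3 → ℝ) (g : Fin nw → ℝ) :
    uZero u *ᵥ Sum.elim (fun _ => 1) g = u := by
  ext i
  simp [uZero, mulVec, dotProduct]

theorem lmi_reformulation_general {q3 q4 nw : ℕ}
    (Bu : Matrix (Fin q4) (Fin q3) ℝ) (Bw : Matrix (Fin q4) (Fin nw) ℝ)
    (y0 r : Fin q4 → ℝ)
    (Qbar : Matrix (Fin q4) (Fin q4) ℝ) (Rbar : Matrix (Fin q3) (Fin q3) ℝ)
    (hQ : Qbar.PosSemidef)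
    (hK : (Rbar + Buᵀ * Qbar * Bu).PosDef)
    (Aw : Matrix (Fin 1 ⊕ Fin nw) (Fin 1 ⊕ Fin nw) ℝ) (hAw : Aw.IsSymm)
    (hSlater : ∃ ghat : Fin nw → ℝ,
        0 < Sum.elim (fun _ => (1 : ℝ)) ghat ⬝ᵥ Aw.mulVec (Sum.elim (fun _ => (1 : ℝ)) ghat))
    (u : Fin q3 → ℝ) (γ : ℝ) :
    (∀ gw : Fin nw → ℝ,
        0 ≤ Sum.elim (fun _ => (1 : ℝ)) gw ⬝ᵥ Aw.mulVec (Sum.elim (fun _ => (1 : ℝ)) gw) →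
        (Bu.mulVec u + Bw.mulVec gw + y0 - r) ⬝ᵥ
            Qbar.mulVec (Bu.mulVec u + Bw.mulVec gw + y0 - r) + u ⬝ᵥ Rbar.mulVec u ≤ γ) ↔
    (∃ α : ℝ, 0 ≤ α ∧
        (Matrix.fromBlocks (Rbar + Buᵀ * Qbar * Bu)⁻¹ (uZero u) (uZero u)ᵀ
          (Qga Bu Bw y0 r Qbar u γ - α • Aw)).PosSemidef) := by
  set K := Rbar + Buᵀ * Qbar * Bu
  have hN : (Qga Bu Bw y0 r Qbar u γ - (uZero u)ᵀ * K * uZero u).IsSymm :=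
    (Qga_isSymm Bu Bw y0 r (isHermitian_iff_isSymm.mp hQ.isHermitian) u γ).sub
      (isSymm_transpose_mul_mul (isHermitian_iff_isSymm.mp hK.isHermitian) _)
  have hcost : ∀ g : Fin nw → ℝ,
      Sum.elim (fun _ => 1) g ⬝ᵥ (Qga Bu Bw y0 r Qbar u γ - (uZero u)ᵀ * K * uZero u) *ᵥ
          Sum.elim (fun _ => 1) g =
        γ - ((Bu *ᵥ u + Bw *ᵥ g + y0 - r) ⬝ᵥ Qbar *ᵥ (Bu *ᵥ u + Bw *ᵥ g + y0 - r) +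
          u ⬝ᵥ Rbar *ᵥ u) := by
    intro g
    rw [sub_mulVec, dotProduct_sub, dotProduct_Qga_mulVec, dotProduct_transpose_mul_mul_mulVec_s11,
      uZero_mulVec_sumElim, add_mulVec, dotProduct_add, dotProduct_transpose_mul_mul_mulVec_s11]
    ring
  simp_rw [hK.posSemidef_fromBlocks_inv_iff_s11, sub_right_comm _ (_ • Aw),
    ← exists_posSemidef_sub_smul_iff hAw hN hSlater, hcost, sub_nonneg]

/-- LMI reformulation of the robust performance constraint (Theorem 1): the worst-case
tracking-error bound over all `g_w` satisfying `[1; g_w]ᵀ A_w [1; g_w] ≥ 0` holds iff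
the LMI is feasible for some `α ≥ 0`. -/
theorem lmi_reformulation {q3 q4 nw : ℕ}
    (Bu : Matrix (Fin q4) (Fin q3) ℝ) (Bw : Matrix (Fin q4) (Fin nw) ℝ)
    (y0 r : Fin q4 → ℝ)
    (Qbar : Matrix (Fin q4) (Fin q4) ℝ) (Rbar : Matrix (Fin q3) (Fin q3) ℝ)
    (hQ : Qbar.PosSemidef) (hR : Rbar.PosSemidef)
    (hK : (Rbar + Buᵀ * Qbar * Bu).PosDef)
    (Aw : Matrix (Fin 1 ⊕ Fin nw) (Fin 1 ⊕ Fin nw) ℝ) (hAw : Aw.IsSymm)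
    (hSlater : ∃ ghat : Fin nw → ℝ,
        0 < Sum.elim (fun _ => (1 : ℝ)) ghat ⬝ᵥ Aw.mulVec (Sum.elim (fun _ => (1 : ℝ)) ghat))
    (u : Fin q3 → ℝ) (γ : ℝ) :
    (∀ gw : Fin nw → ℝ,
        0 ≤ Sum.elim (fun _ => (1 : ℝ)) gw ⬝ᵥ Aw.mulVec (Sum.elim (fun _ => (1 : ℝ)) gw) →
        (Bu.mulVec u + Bw.mulVec gw + y0 - r) ⬝ᵥ
            Qbar.mulVec (Bu.mulVec u + Bw.mulVec gw + y0 - r) + u ⬝ᵥ Rbar.mulVec u ≤ γ) ↔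
    (∃ α : ℝ, 0 ≤ α ∧
        (Matrix.fromBlocks (Rbar + Buᵀ * Qbar * Bu)⁻¹ (uZero u) (uZero u)ᵀ
          (Qga Bu Bw y0 r Qbar u γ - α • Aw)).PosSemidef) :=
  lmi_reformulation_general Bu Bw y0 r Qbar Rbar hQ hK Aw hAw hSlater u γ
end
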